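/- Let ε ≥ 0 and let Γ_1,…,Γ_k ⊂ ℝ^N be C¹ submanifolds of ℝ^N such that for each ν, any two points p, q ∈ Γ_ν can be joined, for every ε' > ε, by a C¹ path in Γ_ν of length at most (1+ε')·|p−q|. Let f be a continuous ℝ^M-valued map on ⋃_ν Γ̄_ν (the union of the Euclidean closures) whose restriction to each Γ_ν is C¹ with ‖D f‖ ≤ L on Γ_ν. Let λ : [0,1] → ⋃_ν Γ̄_ν be a continuous rectifiable path for which there exists a subdivision 0 = t₀ < t₁ < ⋯ < t_k = 1 such that each λ([t_i, t_{i+1}]) is contained in Γ̄_{ν_i} for some index ν_i. Then the length of f∘λ is at most (1+ε)·L times the length of λ. -/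

import Mathlib

open Set Filter

noncomputable section

/-- `Γ` is a C¹ (embedded) submanifold of `ℝ^N`: near each of its points it can be
flattened onto a linear subspace by a C¹ diffeomorphism between open sets of `ℝ^N`. -/
def IsC1Submanifold {N : ℕ} (Γ : Set (EuclideanSpace ℝ (Fin N))) : Prop :=
  ∀ p ∈ Γ, ∃ (U V : Set (EuclideanSpace ℝ (Fin N)))
      (φ ψ : EuclideanSpace ℝ (Fin N) → EuclideanSpace ℝ (Fin N))
      (T : Submodule ℝ (EuclideanSpace ℝ (Fin N))),
    IsOpen U ∧ p ∈ U ∧ IsOpen V ∧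
    ContDiffOn ℝ 1 φ U ∧ ContDiffOn ℝ 1 ψ V ∧
    φ '' U = V ∧ (∀ x ∈ U, ψ (φ x) = x) ∧
    φ '' (Γ ∩ U) = (T : Set _) ∩ V

/-!
Along a `C¹` path in `Γ_ν`, the chain rule and the bound on `Df` over tangent vectors give
`|f q - f p| ≤ L · (length of the path)`. Taking the almost-shortest paths of the regularity
hypothesis and letting `ε' ↓ ε` shows that `f` is `(1 + ε) L`-Lipschitz on `Γ_ν`, hence, by
continuity, on its closure. A Lipschitz map enlarges the variation of a path by at most its
constant, and variation is additive along the subdivision.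
-/

open Topology NNReal

section Curves

variable {E F : Type*} [NormedAddCommGroup E] [NormedSpace ℝ E]
  [NormedAddCommGroup F] [NormedSpace ℝ F]

theorem HasDerivWithinAt.mem_tangentConeAt_of_mapsTo_Icc {γ : ℝ → E} {γ' : E} {S : Set E}
    {a b s : ℝ} (hγ : HasDerivWithinAt γ γ' (Icc a b) s) (hab : a < b) (hs : s ∈ Icc a b)
    (hmaps : MapsTo γ (Icc a b) S) : γ' ∈ tangentConeAt ℝ S (γ s) := by
  have hone : (1 : ℝ) ∈ tangentConeAt ℝ (Icc a b) s := by
    rw [tangentConeAt_eq_univ ((uniqueDiffOn_Icc hab s hs).accPt)]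
    trivial
  simpa using tangentConeAt_mono hmaps.image_subset
    (hγ.hasFDerivWithinAt.mapsTo_tangent_cone hone)

variable {f : E → F} {f' : E → E →L[ℝ] F} {S : Set E} {L : ℝ}

theorem norm_sub_le_mul_integral_norm_deriv (hf : ∀ x ∈ S, HasFDerivWithinAt f (f' x) S x)
    (hbound : ∀ x ∈ S, ∀ v ∈ tangentConeAt ℝ S x, ‖f' x v‖ ≤ L * ‖v‖)
    {γ : ℝ → E} (hγ : ContDiff ℝ 1 γ) {a b : ℝ} (hab : a ≤ b) (hmaps : MapsTo γ (Icc a b) S) :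
    ‖f (γ b) - f (γ a)‖ ≤ L * ∫ s in a..b, ‖deriv γ s‖ := by
  rcases hab.eq_or_lt with rfl | hab
  · simp
  have hγ' : ∀ s, HasDerivAt γ (deriv γ s) s := fun s ↦
    ((hγ.differentiable one_ne_zero) s).hasDerivAt
  have hspeed : Continuous fun s ↦ ‖deriv γ s‖ := (hγ.continuous_deriv le_rfl).norm
  have hcomp : ∀ s ∈ Icc a b,
      HasDerivWithinAt (fun s ↦ f (γ s) - f (γ a)) (f' (γ s) (deriv γ s)) (Icc a b) s :=
    fun s hs ↦
      ((hf _ (hmaps hs)).comp_hasDerivWithinAt s (hγ' s).hasDerivWithinAt hmaps).sub_const _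
  refine image_norm_le_of_norm_deriv_right_le_deriv_boundary
    (B := fun x ↦ L * ∫ s in a..x, ‖deriv γ s‖)
    (fun s hs ↦ (hcomp s hs).continuousWithinAt)
    (fun s hs ↦ (hcomp s (Ico_subset_Icc_self hs)).mono_of_mem_nhdsWithin
      (Icc_mem_nhdsGE_of_mem hs)) (by simp)
    (fun x ↦ ((hspeed.integral_hasStrictDerivAt a x).hasDerivAt.const_mul L))
    (fun s hs ↦ hbound _ (hmaps (Ico_subset_Icc_self hs)) _ ?_) (right_mem_Icc.2 hab.le)
  exact (hγ' s).hasDerivWithinAt.mem_tangentConeAt_of_mapsTo_Icc hab (Ico_subset_Icc_self hs)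
    hmaps

def IsC1QuasiConvex (S : Set E) (ε : ℝ) : Prop :=
  ∀ p ∈ S, ∀ q ∈ S, ∀ ε' > ε, ∃ γ : ℝ → E, ContDiff ℝ 1 γ ∧ (∀ t ∈ Icc (0 : ℝ) 1, γ t ∈ S) ∧
    γ 0 = p ∧ γ 1 = q ∧ (∫ t in (0 : ℝ)..1, ‖deriv γ t‖) ≤ (1 + ε') * ‖p - q‖

theorem lipschitzOnWith_of_isC1QuasiConvex {ε : ℝ} (hS : IsC1QuasiConvex S ε)
    (hf : ∀ x ∈ S, HasFDerivWithinAt f (f' x) S x)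
    (hbound : ∀ x ∈ S, ∀ v ∈ tangentConeAt ℝ S x, ‖f' x v‖ ≤ L * ‖v‖) (hL : 0 ≤ L) :
    LipschitzOnWith ((1 + ε) * L).toNNReal f S := by
  refine LipschitzOnWith.of_dist_le' fun p hp q hq ↦ ?_
  rw [dist_eq_norm, dist_eq_norm, norm_sub_rev p q, mul_right_comm]
  have hnear : ∀ ε' > ε, ‖f p - f q‖ ≤ (1 + ε') * ‖q - p‖ * L := by
    intro ε' hε'
    obtain ⟨γ, hγ, hγS, rfl, rfl, hlen⟩ := hS q hq p hp ε' hε'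
    calc ‖f (γ 1) - f (γ 0)‖ ≤ L * ∫ s in (0 : ℝ)..1, ‖deriv γ s‖ :=
          norm_sub_le_mul_integral_norm_deriv hf hbound hγ zero_le_one hγS
      _ ≤ L * ((1 + ε') * ‖γ 0 - γ 1‖) := by gcongr
      _ = (1 + ε') * ‖γ 0 - γ 1‖ * L := by ring
  have hlim : Tendsto (fun ε' ↦ (1 + ε') * ‖q - p‖ * L) (𝓝[>] ε)
      (𝓝 ((1 + ε) * ‖q - p‖ * L)) :=
    ((by fun_prop : Continuous fun ε' : ℝ ↦ (1 + ε') * ‖q - p‖ * L).tendsto ε).mono_left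
      nhdsWithin_le_nhds
  exact ge_of_tendsto hlim (eventually_nhdsWithin_of_forall hnear)

end Curves

section Variation

variable {α E F : Type*} [LinearOrder α] [PseudoEMetricSpace E] [PseudoEMetricSpace F]

theorem eVariationOn_Icc_eq_sum (g : α → E) {m : ℕ} {t : Fin (m + 1) → α} (ht : Monotone t) :
    eVariationOn g (Icc (t 0) (t (Fin.last m))) =
      ∑ i : Fin m, eVariationOn g (Icc (t i.castSucc) (t i.succ)) := by
  induction m with
  | zero => simp
  | succ m ih =>
    have hinit := ih (t := fun i ↦ t i.castSucc) (ht.comp Fin.strictMono_castSucc.monotone)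
    simp only [Fin.castSucc_zero, ← Fin.succ_castSucc] at hinit
    rw [Fin.sum_univ_castSucc, ← hinit, Fin.succ_last]
    have h := eVariationOn.Icc_add_Icc g (s := univ) (ht (Fin.zero_le _))
      (ht (Fin.castSucc_le_succ (Fin.last m))) (mem_univ _)
    simpa only [univ_inter, Fin.succ_last] using h.symm

theorem eVariationOn_comp_le_of_piecewise_lipschitzOnWith {f : E → F} {g : α → E} {C : ℝ≥0}
    {m : ℕ} {t : Fin (m + 1) → α} (ht : Monotone t)
    (hpieces : ∀ i : Fin m, ∃ s, LipschitzOnWith C f s ∧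
      MapsTo g (Icc (t i.castSucc) (t i.succ)) s) :
    eVariationOn (f ∘ g) (Icc (t 0) (t (Fin.last m))) ≤
      C * eVariationOn g (Icc (t 0) (t (Fin.last m))) := by
  rw [eVariationOn_Icc_eq_sum _ ht, eVariationOn_Icc_eq_sum _ ht, Finset.mul_sum]
  refine Finset.sum_le_sum fun i _ ↦ ?_
  obtain ⟨s, hlip, hmaps⟩ := hpieces i
  exact hlip.comp_eVariationOn_le hmaps

end Variation

theorem length_image_le_of_piecewise_C1_bound_general {N M k : ℕ}
    (ε L : ℝ) (hε : 0 ≤ ε)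
    (Γ : Fin k → Set (EuclideanSpace ℝ (Fin N)))
    -- each `Γ_ν` is `K_ε`-regular: any two of its points can be joined, for every
    -- `ε' > ε`, by a C¹ path in `Γ_ν` of length at most `(1+ε')·|p-q|`:
    (hgeo : ∀ ν, ∀ p ∈ Γ ν, ∀ q ∈ Γ ν, ∀ ε' > ε,
      ∃ lam : ℝ → EuclideanSpace ℝ (Fin N),
        ContDiff ℝ 1 lam ∧ (∀ t ∈ Icc (0 : ℝ) 1, lam t ∈ Γ ν) ∧
        lam 0 = p ∧ lam 1 = q ∧
        (∫ t in (0 : ℝ)..1, ‖deriv lam t‖) ≤ (1 + ε') * ‖p - q‖)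
    (f : EuclideanSpace ℝ (Fin N) → EuclideanSpace ℝ (Fin M))
    -- `f` is continuous on the union of the closures:
    (hfcont : ContinuousOn f (⋃ ν, closure (Γ ν)))
    -- `f` is C¹ on each `Γ_ν` with `‖Df‖ ≤ L` there:
    (Df : Fin k → EuclideanSpace ℝ (Fin N) →
      EuclideanSpace ℝ (Fin N) →L[ℝ] EuclideanSpace ℝ (Fin M))
    (hf : ∀ ν, ∀ p ∈ Γ ν, HasFDerivWithinAt f (Df ν p) (Γ ν) p)
    (hDf : ∀ ν, ∀ p ∈ Γ ν, ∀ v ∈ tangentConeAt ℝ (Γ ν) p, ‖Df ν p v‖ ≤ L * ‖v‖)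
    (lam : ℝ → EuclideanSpace ℝ (Fin N))
    -- ... admitting a subdivision `0 = t₀ < t₁ < ⋯ < t_m = 1` with each piece contained
    -- in the closure of some `Γ_ν`:
    (m : ℕ) (t : Fin (m + 1) → ℝ) (ht : StrictMono t)
    (ht0 : t 0 = 0) (ht1 : t (Fin.last m) = 1)
    (hpieces : ∀ i : Fin m, ∃ ν,
      lam '' Icc (t i.castSucc) (t i.succ) ⊆ closure (Γ ν)) :
    eVariationOn (f ∘ lam) (Icc (0 : ℝ) 1) ≤
      ENNReal.ofReal ((1 + ε) * L) * eVariationOn lam (Icc (0 : ℝ) 1) := by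
  set L' := max L 0
  have hlip : ∀ ν, LipschitzOnWith ((1 + ε) * L').toNNReal f (closure (Γ ν)) := fun ν ↦
    (lipschitzOnWith_of_isC1QuasiConvex (hgeo ν) (hf ν)
      (fun p hp v hv ↦ (hDf ν p hp v hv).trans (by gcongr; exact le_max_left L 0))
      (le_max_right L 0)).closure (hfcont.mono (subset_iUnion (fun ν ↦ closure (Γ ν)) ν))
  have hvar := eVariationOn_comp_le_of_piecewise_lipschitzOnWith ht.monotone fun i ↦
    let ⟨ν, hν⟩ := hpieces i; ⟨closure (Γ ν), hlip ν, mapsTo_iff_image_subset.2 hν⟩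
  have hconst : ENNReal.ofReal ((1 + ε) * L') = ENNReal.ofReal ((1 + ε) * L) := by
    rw [ENNReal.ofReal_mul (by linarith), ENNReal.ofReal_mul (by linarith)]
    simp [L']
  rw [ht0, ht1] at hvar
  exact hvar.trans_eq (by rw [← hconst]; rfl)

theorem length_image_le_of_piecewise_C1_bound {N M k : ℕ}
    (ε L : ℝ) (hε : 0 ≤ ε)
    (Γ : Fin k → Set (EuclideanSpace ℝ (Fin N)))
    (hΓ : ∀ ν, IsC1Submanifold (Γ ν))
    -- each `Γ_ν` is `K_ε`-regular: any two of its points can be joined, for every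
    -- `ε' > ε`, by a C¹ path in `Γ_ν` of length at most `(1+ε')·|p-q|`:
    (hgeo : ∀ ν, ∀ p ∈ Γ ν, ∀ q ∈ Γ ν, ∀ ε' > ε,
      ∃ lam : ℝ → EuclideanSpace ℝ (Fin N),
        ContDiff ℝ 1 lam ∧ (∀ t ∈ Icc (0 : ℝ) 1, lam t ∈ Γ ν) ∧
        lam 0 = p ∧ lam 1 = q ∧
        (∫ t in (0 : ℝ)..1, ‖deriv lam t‖) ≤ (1 + ε') * ‖p - q‖)
    (f : EuclideanSpace ℝ (Fin N) → EuclideanSpace ℝ (Fin M))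
    -- `f` is continuous on the union of the closures:
    (hfcont : ContinuousOn f (⋃ ν, closure (Γ ν)))
    -- `f` is C¹ on each `Γ_ν` with `‖Df‖ ≤ L` there:
    (Df : Fin k → EuclideanSpace ℝ (Fin N) →
      EuclideanSpace ℝ (Fin N) →L[ℝ] EuclideanSpace ℝ (Fin M))
    (hf : ∀ ν, ∀ p ∈ Γ ν, HasFDerivWithinAt f (Df ν p) (Γ ν) p)
    (hfC1 : ∀ ν, ContinuousOn (Df ν) (Γ ν))
    (hDf : ∀ ν, ∀ p ∈ Γ ν, ∀ v ∈ tangentConeAt ℝ (Γ ν) p, ‖Df ν p v‖ ≤ L * ‖v‖)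
    -- `λ` is a continuous rectifiable path in `⋃ Γ̄_ν` ...
    (lam : ℝ → EuclideanSpace ℝ (Fin N))
    (hlamc : ContinuousOn lam (Icc (0 : ℝ) 1))
    (hlam : MapsTo lam (Icc (0 : ℝ) 1) (⋃ ν, closure (Γ ν)))
    (hrect : eVariationOn lam (Icc (0 : ℝ) 1) < ⊤)
    -- ... admitting a subdivision `0 = t₀ < t₁ < ⋯ < t_m = 1` with each piece contained
    -- in the closure of some `Γ_ν`:
    (m : ℕ) (t : Fin (m + 1) → ℝ) (ht : StrictMono t)
    (ht0 : t 0 = 0) (ht1 : t (Fin.last m) = 1)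
    (hpieces : ∀ i : Fin m, ∃ ν,
      lam '' Icc (t i.castSucc) (t i.succ) ⊆ closure (Γ ν)) :
    eVariationOn (f ∘ lam) (Icc (0 : ℝ) 1) ≤
      ENNReal.ofReal ((1 + ε) * L) * eVariationOn lam (Icc (0 : ℝ) 1) :=
  length_image_le_of_piecewise_C1_bound_general ε L hε Γ hgeo f hfcont Df hf hDf lam m t ht ht0 ht1
    hpieces

end
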